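/- Let f ∈ L log L(B_r(x₀)) with r ∈ (0, 1/2] and B_r(x₀) ⊂ ℝ⁴, and define f̂(x) := r⁴ f(x₀ + rx) on B₁. Then there exists a universal constant C > 0 such that ‖f̂‖*_{L log L(B₁)} ≤ C ‖f‖*_{L log L(B_r(x₀))}. -/

import Mathlib

open MeasureTheory Metric Real Filter

noncomputable section

abbrev E4 := EuclideanSpace ℝ (Fin 4)

/-- Non-increasing rearrangement of `|f|` on `[0, ∞)`. -/
def rearr (f : E4 → ℝ) (t : ℝ) : ℝ :=
  sInf {s : ℝ | 0 ≤ s ∧ (volume {x : E4 | s < |f x|}).toReal ≤ t}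

/-- The `L log L` seminorm of `f` on `Ω`:  `∫₀^{|Ω|} f*(t) log(2 + 1/t) dt`. -/
def LlogL (f : E4 → ℝ) (Ω : Set E4) : ℝ :=
  ∫ t in Set.Ioo 0 (volume Ω).toReal, rearr (Ω.indicator f) t * Real.log (2 + 1 / t)

/-- `f ∈ L log L(Ω)`. -/
def MemLlogL (f : E4 → ℝ) (Ω : Set E4) : Prop :=
  IntegrableOn (fun x => |f x| * Real.log (2 + |f x|)) Ω

open Set

open scoped Pointwise

/-! The affine change of variables `x ↦ x₀ + r x` divides volumes by `r⁴`, so the rearrangement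
of `f̂` is `f̂*(t) = r⁴ f*(r⁴ t)`. Substituting `u = r⁴ t` turns `‖f̂‖*` into
`∫₀^{|B_r|} f*(u) log(2 + r⁴/u) du`, and `log(2 + r⁴/u) ≤ log(2 + 1/u)` because `r ≤ 1`, so `C = 1`.
Conversely `log(2 + 1/u) ≤ log(2 + r⁴/u) - log r⁴`, which keeps the right-hand integral finite
whenever the left-hand one is (a divergent Bochner integral would count as `0`). -/

def llogWeight (t : ℝ) : ℝ := log (2 + 1 / t)

section llogWeight

variable {a t : ℝ}

lemma log_two_le_llogWeight (ht : 0 < t) : log 2 ≤ llogWeight t :=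
  log_le_log two_pos (by linarith [one_div_pos.2 ht])

lemma llogWeight_pos (ht : 0 < t) : 0 < llogWeight t :=
  (log_pos one_lt_two).trans_le (log_two_le_llogWeight ht)

lemma llogWeight_le_llogWeight_mul (ha : 0 < a) (ha1 : a ≤ 1) (ht : 0 < t) :
    llogWeight t ≤ llogWeight (a * t) := by
  have : 1 / t ≤ 1 / (a * t) := one_div_le_one_div_of_le (by positivity) (by nlinarith)
  exact log_le_log (by linarith [one_div_pos.2 ht]) (by linarith)

lemma llogWeight_mul_le (ha : 0 < a) (ha1 : a ≤ 1) (ht : 0 < t) :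
    llogWeight (a * t) ≤ llogWeight t - log a := by
  have h2 : 2 + 1 / (a * t) ≤ a⁻¹ * (2 + 1 / t) := by
    have : a⁻¹ * (2 + 1 / t) = 2 * a⁻¹ + 1 / (a * t) := by field_simp
    nlinarith [(one_le_inv₀ ha).2 ha1]
  calc llogWeight (a * t) ≤ log (a⁻¹ * (2 + 1 / t)) := log_le_log (by positivity) h2
    _ = llogWeight t - log a := by
      rw [log_mul (by positivity) (by positivity), log_inv, llogWeight]; ring

lemma measurable_llogWeight : Measurable llogWeight :=
  measurable_log.comp (measurable_const.add (measurable_id.const_div 1))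

end llogWeight

lemma integrableOn_mul_llogWeight_comp_mul {ψ : ℝ → ℝ} {a V : ℝ} (hψ : ∀ t, 0 ≤ ψ t)
    (ha : 0 < a) (ha1 : a ≤ 1) (h : IntegrableOn (fun t => ψ t * llogWeight t) (Ioo 0 V)) :
    IntegrableOn (fun t => ψ t * llogWeight (a * t)) (Ioo 0 V) := by
  -- `ψ = (ψ · llogWeight) / llogWeight` on `(0, V)`, where the weight is at least `log 2 > 0`
  have hmeas : AEStronglyMeasurable ψ (volume.restrict (Ioo 0 V)) :=
    (h.1.div₀ measurable_llogWeight.aestronglyMeasurable).congr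
      (ae_restrict_of_forall_mem measurableSet_Ioo fun t ht =>
        mul_div_cancel_right₀ _ (llogWeight_pos ht.1).ne')
  have hψint : IntegrableOn ψ (Ioo 0 V) := by
    refine Integrable.mono' (h.const_mul (log 2)⁻¹) hmeas
      (ae_restrict_of_forall_mem measurableSet_Ioo fun t ht => ?_)
    rw [norm_of_nonneg (hψ t), ← mul_assoc, inv_mul_eq_div, div_mul_eq_mul_div,
      le_div_iff₀ (log_pos one_lt_two)]
    exact mul_le_mul_of_nonneg_left (log_two_le_llogWeight ht.1) (hψ t)
  refine Integrable.mono' (h.add (hψint.const_mul (-log a)))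
    (hmeas.mul (measurable_llogWeight.comp (measurable_const_mul a)).aestronglyMeasurable)
    (ae_restrict_of_forall_mem measurableSet_Ioo fun t ht => ?_)
  rw [norm_of_nonneg (mul_nonneg (hψ t) (llogWeight_pos (mul_pos ha ht.1)).le), Pi.add_apply]
  nlinarith [llogWeight_mul_le ha ha1 ht.1, hψ t]

lemma mul_setIntegral_Ioo_comp_mul (F : ℝ → ℝ) {a V : ℝ} (ha : 0 < a) (hV : 0 ≤ V) :
    a * ∫ t in Ioo 0 V, F (a * t) = ∫ u in Ioo 0 (a * V), F u := by
  rw [← integral_Ioc_eq_integral_Ioo, ← intervalIntegral.integral_of_le hV,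
    intervalIntegral.integral_comp_mul_left F ha.ne', mul_zero, smul_eq_mul,
    mul_inv_cancel_left₀ ha.ne', intervalIntegral.integral_of_le (by positivity),
    integral_Ioc_eq_integral_Ioo]

lemma setIntegral_mul_comp_mul_llogWeight_le {φ : ℝ → ℝ} (hφ : ∀ t, 0 ≤ φ t) {a V : ℝ}
    (ha : 0 < a) (ha1 : a ≤ 1) (hV : 0 ≤ V) :
    ∫ t in Ioo 0 V, a * φ (a * t) * llogWeight t ≤ ∫ u in Ioo 0 (a * V), φ u * llogWeight u := by
  by_cases hint : IntegrableOn (fun t => a * φ (a * t) * llogWeight t) (Ioo 0 V)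
  swap
  · rw [integral_undef hint]
    exact setIntegral_nonneg measurableSet_Ioo fun u hu =>
      mul_nonneg (hφ u) (llogWeight_pos hu.1).le
  have hcomp : IntegrableOn (fun t => φ (a * t) * llogWeight (a * t)) (Ioo 0 V) := by
    refine integrableOn_mul_llogWeight_comp_mul (fun _ => hφ _) ha ha1 ?_
    have := hint.const_mul a⁻¹
    simp only [mul_assoc, ← mul_assoc a⁻¹, inv_mul_cancel₀ ha.ne', one_mul] at this
    exact this
  calc ∫ t in Ioo 0 V, a * φ (a * t) * llogWeight t
      ≤ ∫ t in Ioo 0 V, a * (φ (a * t) * llogWeight (a * t)) := by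
        refine setIntegral_mono_on hint (hcomp.const_mul a) measurableSet_Ioo fun t ht => ?_
        rw [mul_assoc]
        exact mul_le_mul_of_nonneg_left (mul_le_mul_of_nonneg_left
          (llogWeight_le_llogWeight_mul ha ha1 ht.1) (hφ _)) ha.le
    _ = ∫ u in Ioo 0 (a * V), φ u * llogWeight u := by
        rw [integral_const_mul, mul_setIntegral_Ioo_comp_mul (fun u => φ u * llogWeight u) ha hV]

lemma MeasureTheory.Measure.addHaar_preimage_add_smul {E : Type*} [NormedAddCommGroup E]
    [NormedSpace ℝ E] [MeasurableSpace E] [BorelSpace E] [FiniteDimensional ℝ E] (μ : Measure E)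
    [μ.IsAddHaarMeasure] (x₀ : E) {r : ℝ} (hr : r ≠ 0) (A : Set E) :
    μ ((fun x => x₀ + r • x) ⁻¹' A) = ENNReal.ofReal |(r ^ Module.finrank ℝ E)⁻¹| * μ A := by
  rw [show (fun x => x₀ + r • x) ⁻¹' A = (r • ·) ⁻¹' ((x₀ + ·) ⁻¹' A) from rfl,
    Measure.addHaar_preimage_smul μ hr, measure_preimage_add]

lemma rearr_nonneg (f : E4 → ℝ) (t : ℝ) : 0 ≤ rearr f t :=
  Real.sInf_nonneg fun _ hs => hs.1

lemma rearr_comp_affine (g : E4 → ℝ) (x₀ : E4) {c r : ℝ} (hc : 0 < c) (hr : r ≠ 0) (t : ℝ) :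
    rearr (fun x => c * g (x₀ + r • x)) t = c * rearr g (r ^ 4 * t) := by
  have hr4 : 0 < r ^ 4 := Even.pow_pos (by decide) hr
  have hlevel : ∀ s, (volume {x : E4 | s < |c * g (x₀ + r • x)|}).toReal
      = (r ^ 4)⁻¹ * (volume {y : E4 | c⁻¹ * s < |g y|}).toReal := by
    intro s
    have hpre : {x : E4 | s < |c * g (x₀ + r • x)|}
        = (fun x => x₀ + r • x) ⁻¹' {y | c⁻¹ * s < |g y|} := by
      ext x
      simp only [mem_ofPred_eq, mem_preimage, abs_mul, abs_of_pos hc, inv_mul_lt_iff₀ hc]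
    rw [hpre, Measure.addHaar_preimage_add_smul volume x₀ hr, finrank_euclideanSpace_fin,
      ENNReal.toReal_mul, ENNReal.toReal_ofReal (abs_nonneg _), abs_of_pos (inv_pos.2 hr4)]
  have hset : {s | 0 ≤ s ∧ (volume {x : E4 | s < |c * g (x₀ + r • x)|}).toReal ≤ t}
      = c • {s | 0 ≤ s ∧ (volume {y : E4 | s < |g y|}).toReal ≤ r ^ 4 * t} := by
    ext s
    simp only [mem_smul_set_iff_inv_smul_mem₀ hc.ne', mem_ofPred_eq, smul_eq_mul, hlevel,
      inv_mul_le_iff₀ hr4, mul_nonneg_iff_of_pos_left (inv_pos.2 hc)]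
  rw [rearr, rearr, hset, Real.sInf_smul_of_nonneg hc.le, smul_eq_mul]

lemma indicator_ball_comp_affine {E : Type*} [NormedAddCommGroup E] [NormedSpace ℝ E]
    (f : E → ℝ) (x₀ : E) {r : ℝ} (hr : 0 < r) (c : ℝ) :
    (ball 0 1).indicator (fun x => c * f (x₀ + r • x))
      = fun x => c * (ball x₀ r).indicator f (x₀ + r • x) := by
  have hball : (fun x => x₀ + r • x) ⁻¹' ball x₀ r = ball 0 1 := by
    ext x
    simp only [mem_preimage, mem_ball, dist_eq_norm, sub_zero, add_sub_cancel_left, norm_smul,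
      Real.norm_eq_abs, abs_of_pos hr, mul_lt_iff_lt_one_right hr]
  ext x
  rw [← hball, indicator_const_mul, ← indicator_comp_right (fun x => x₀ + r • x)]
  rfl

/-- Lemma: for `f ∈ L log L(B_r(x₀))`, `r ∈ (0,1/2]`, the rescaled function
`f̂(x) := r⁴ f(x₀ + rx)` satisfies `‖f̂‖*_{L log L(B₁)} ≤ C ‖f‖*_{L log L(B_r(x₀))}`. -/
theorem LlogL_scaling :
    ∃ C : ℝ, 0 < C ∧ ∀ (f : E4 → ℝ) (x₀ : E4) (r : ℝ),
      0 < r → r ≤ 1 / 2 → Measurable f → MemLlogL f (ball x₀ r) →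
      LlogL (fun x => r ^ 4 * f (x₀ + r • x)) (ball 0 1) ≤ C * LlogL f (ball x₀ r) := by
  refine ⟨1, one_pos, fun f x₀ r hr hr2 _ _ => ?_⟩
  have hvol : (volume (ball x₀ r)).toReal = r ^ 4 * (volume (ball (0 : E4) 1)).toReal := by
    rw [Measure.addHaar_ball volume x₀ hr.le, finrank_euclideanSpace_fin, ENNReal.toReal_mul,
      ENNReal.toReal_ofReal (by positivity)]
  rw [one_mul, LlogL, LlogL, indicator_ball_comp_affine f x₀ hr, hvol]
  simp_rw [rearr_comp_affine _ x₀ (pow_pos hr 4) hr.ne']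
  exact setIntegral_mul_comp_mul_llogWeight_le (rearr_nonneg _) (pow_pos hr 4)
    (pow_le_one₀ hr.le (by linarith)) ENNReal.toReal_nonneg
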